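/- In the polynomial ring ℂ[x,y,z], the radical of the ideal generated by the six polynomials xy+yz^3+xz^4+z^7, x^2z^2+xz^5, x^2+2xz^3+z^6, xy+x^2z+yz^3+2xz^4+z^7, -x^2-xz^3, and -y^2-xyz-x^2z^2-2yz^4-xz^5-z^8 equals the ideal generated by x+z^3 and y^2+yz^4+z^8. -/
import Mathlib


open MvPolynomial

noncomputable def ra : ℂ := (1 + Real.sqrt 3 * Complex.I)/2
noncomputable def rb : ℂ := (1 - Real.sqrt 3 * Complex.I)/2

lemma hs3 : ((Real.sqrt 3 : ℝ) : ℂ)^2 = 3 := by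
  norm_cast
  rw [Real.sq_sqrt]; norm_num

lemma hra : ra^2 - ra + 1 = 0 := by
  unfold ra
  linear_combination (Complex.I^2/4) * hs3 + (3/4) * Complex.I_sq

lemma hrb : rb^2 - rb + 1 = 0 := by
  unfold rb
  linear_combination (Complex.I^2/4) * hs3 + (3/4) * Complex.I_sq

lemma hsum : ra + rb = 1 := by unfold ra rb; ring

lemma hprod : ra * rb = 1 := by
  unfold ra rb
  linear_combination (-Complex.I^2/4) * hs3 - (3/4) * Complex.I_sq

lemma hne : ra ≠ rb := by
  intro h
  have h1 : (Real.sqrt 3 : ℂ) * Complex.I = 0 := by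
    unfold ra rb at h; linear_combination h
  rcases mul_eq_zero.mp h1 with h2 | h2
  · norm_cast at h2
    exact Real.sqrt_ne_zero'.mpr (by norm_num) h2
  · exact Complex.I_ne_zero h2

noncomputable def phi (γ : ℂ) : MvPolynomial (Fin 3) ℂ →ₐ[ℂ] Polynomial ℂ :=
  aeval ![-(Polynomial.X)^3, -Polynomial.C γ * Polynomial.X^4, Polynomial.X]

lemma sub_aeval_mem (s : Fin 3 → MvPolynomial (Fin 3) ℂ) (p : MvPolynomial (Fin 3) ℂ) :
    p - aeval s p ∈ Ideal.span {X 0 - s 0, X 1 - s 1, X 2 - s 2} := by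
  induction p using MvPolynomial.induction_on with
  | C a => simp [MvPolynomial.algebraMap_eq]
  | add p q hp hq =>
      have : p + q - aeval s (p + q) = (p - aeval s p) + (q - aeval s q) := by
        rw [map_add]; ring
      rw [this]; exact Ideal.add_mem _ hp hq
  | mul_X p n hp =>
      have h1 : X n - s n ∈ Ideal.span {X 0 - s 0, X 1 - s 1, X 2 - s 2} := by
        fin_cases n <;> apply Ideal.subset_span <;> simp
      have h2 : p * X n - aeval s (p * X n) = p * (X n - s n) + (p - aeval s p) * s n := by
        rw [map_mul, aeval_X]; ring
      rw [h2]
      exact Ideal.add_mem _ (Ideal.mul_mem_left _ _ h1) (Ideal.mul_mem_right _ _ hp)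

lemma mem_span_of_phi_eq_zero (γ : ℂ) (p : MvPolynomial (Fin 3) ℂ)
    (h : phi γ p = 0) :
    p ∈ Ideal.span {X 0 + (X 2 : MvPolynomial (Fin 3) ℂ)^3, X 1 + C γ * (X 2)^4} := by
  set s : Fin 3 → MvPolynomial (Fin 3) ℂ := ![-(X 2)^3, -C γ * (X 2)^4, X 2] with hs
  have key : aeval s p = 0 := by
    have hcomp : (Polynomial.aeval (X 2 : MvPolynomial (Fin 3) ℂ)).comp (phi γ) = aeval s := by
      unfold phi
      rw [MvPolynomial.comp_aeval]
      congr 1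
      funext i
      fin_cases i <;> simp [hs, algebraMap_eq]
    have h2 := congrArg (Polynomial.aeval (X 2 : MvPolynomial (Fin 3) ℂ)) h
    rw [map_zero] at h2
    rw [← hcomp]
    exact h2
  have h1 := sub_aeval_mem s p
  rw [key, sub_zero] at h1
  have hle : Ideal.span {X 0 - s 0, X 1 - s 1, X 2 - s 2} ≤
      Ideal.span {X 0 + (X 2 : MvPolynomial (Fin 3) ℂ)^3, X 1 + C γ * (X 2)^4} := by
    rw [Ideal.span_le]
    rintro q (rfl | rfl | rfl)
    · apply Ideal.subset_span; left; simp [hs]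
    · apply Ideal.subset_span; right; simp [hs]
    · simp [hs]
  exact hle h1

lemma span_le_ker (γ : ℂ) (hγ : γ^2 - γ + 1 = 0) :
    Ideal.span
      {(X 0 : MvPolynomial (Fin 3) ℂ) * X 1 + X 1 * (X 2) ^ 3 + X 0 * (X 2) ^ 4 + (X 2) ^ 7,
        (X 0) ^ 2 * (X 2) ^ 2 + X 0 * (X 2) ^ 5,
        (X 0) ^ 2 + 2 * X 0 * (X 2) ^ 3 + (X 2) ^ 6,
        X 0 * X 1 + (X 0) ^ 2 * X 2 + X 1 * (X 2) ^ 3 + 2 * X 0 * (X 2) ^ 4 + (X 2) ^ 7,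
        -(X 0) ^ 2 - X 0 * (X 2) ^ 3,
        -(X 1) ^ 2 - X 0 * X 1 * X 2 - (X 0) ^ 2 * (X 2) ^ 2 - 2 * X 1 * (X 2) ^ 4
          - X 0 * (X 2) ^ 5 - (X 2) ^ 8} ≤ RingHom.ker (phi γ).toRingHom := by
  have hC : (Polynomial.C γ)^2 - Polynomial.C γ + 1 = (0 : Polynomial ℂ) := by
    have := congrArg Polynomial.C hγ
    simpa using this
  rw [Ideal.span_le]
  rintro q (rfl|rfl|rfl|rfl|rfl|rfl) <;>
    simp only [SetLike.mem_coe, RingHom.mem_ker, AlgHom.toRingHom_eq_coe, RingHom.coe_coe] <;>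
    simp [phi] <;>
    first
    | ring1
    | linear_combination (-(Polynomial.X:Polynomial ℂ)^8) * hC

/-- In `ℂ[x,y,z]` (with `x = X 0`, `y = X 1`, `z = X 2`), the radical of the ideal
generated by `xy+yz^3+xz^4+z^7`, `x^2z^2+xz^5`, `x^2+2xz^3+z^6`,
`xy+x^2z+yz^3+2xz^4+z^7`, `-x^2-xz^3`, `-y^2-xyz-x^2z^2-2yz^4-xz^5-z^8` equals the
ideal generated by `x+z^3` and `y^2+yz^4+z^8`. -/
theorem stmt_7 :
    (Ideal.span
      {(X 0 : MvPolynomial (Fin 3) ℂ) * X 1 + X 1 * (X 2) ^ 3 + X 0 * (X 2) ^ 4 + (X 2) ^ 7,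
        (X 0) ^ 2 * (X 2) ^ 2 + X 0 * (X 2) ^ 5,
        (X 0) ^ 2 + 2 * X 0 * (X 2) ^ 3 + (X 2) ^ 6,
        X 0 * X 1 + (X 0) ^ 2 * X 2 + X 1 * (X 2) ^ 3 + 2 * X 0 * (X 2) ^ 4 + (X 2) ^ 7,
        -(X 0) ^ 2 - X 0 * (X 2) ^ 3,
        -(X 1) ^ 2 - X 0 * X 1 * X 2 - (X 0) ^ 2 * (X 2) ^ 2 - 2 * X 1 * (X 2) ^ 4
          - X 0 * (X 2) ^ 5 - (X 2) ^ 8}).radical =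
    Ideal.span
      {(X 0 : MvPolynomial (Fin 3) ℂ) + (X 2) ^ 3,
        (X 1) ^ 2 + X 1 * (X 2) ^ 4 + (X 2) ^ 8} := by
  apply le_antisymm
  · -- radical ≤ J
    intro p hp
    obtain ⟨n, hn⟩ := Ideal.mem_radical_iff.mp hp
    have hker : ∀ γ : ℂ, γ^2 - γ + 1 = 0 → phi γ p = 0 := by
      intro γ hγ
      have h1 : phi γ p ^ n = 0 := by
        have h2 := span_le_ker γ hγ hn
        rw [RingHom.mem_ker] at h2
        simpa [map_pow] using h2
      rcases Nat.eq_zero_or_pos n with hn0 | hn0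
      · exfalso
        rw [hn0, pow_zero] at h1
        exact one_ne_zero h1
      · exact pow_eq_zero_iff hn0.ne' |>.mp h1
    have hA := mem_span_of_phi_eq_zero ra p (hker ra hra)
    rw [Ideal.mem_span_pair] at hA
    obtain ⟨a, b, hab⟩ := hA
    have hu0 : phi rb ((X 0 : MvPolynomial (Fin 3) ℂ) + (X 2)^3) = 0 := by simp [phi]
    have hb0 : phi rb b = 0 := by
      have h1 : phi rb (b * (X 1 + C ra * (X 2 : MvPolynomial (Fin 3) ℂ)^4)) = 0 := by
        have heq : b * (X 1 + C ra * (X 2 : MvPolynomial (Fin 3) ℂ)^4)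
            = p - a * (X 0 + (X 2)^3) := by linear_combination hab
        rw [heq, map_sub, hker rb hrb, map_mul, hu0]
        ring
      rw [map_mul] at h1
      have hv : phi rb (X 1 + C ra * (X 2 : MvPolynomial (Fin 3) ℂ)^4) ≠ 0 := by
        have : phi rb (X 1 + C ra * (X 2 : MvPolynomial (Fin 3) ℂ)^4)
            = Polynomial.C (ra - rb) * Polynomial.X^4 := by
          simp [phi, algebraMap_eq]
          ring
        rw [this]
        intro h
        rcases mul_eq_zero.mp h with h2 | h2
        · rw [Polynomial.C_eq_zero, sub_eq_zero] at h2
          exact hne h2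
        · exact Polynomial.X_ne_zero (pow_eq_zero_iff (by norm_num) |>.mp h2)
      exact (mul_eq_zero.mp h1).resolve_right hv
    have hB := mem_span_of_phi_eq_zero rb b hb0
    rw [Ideal.mem_span_pair] at hB
    obtain ⟨c, d, hcd⟩ := hB
    rw [Ideal.mem_span_pair]
    refine ⟨a + c * (X 1 + C ra * (X 2)^4), d, ?_⟩
    have hsC : (C ra : MvPolynomial (Fin 3) ℂ) + C rb = 1 := by
      rw [← map_add, hsum, map_one]
    have hpC : (C ra : MvPolynomial (Fin 3) ℂ) * C rb = 1 := by
      rw [← map_mul, hprod, map_one]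
    linear_combination hab + (X 1 + C ra * (X 2 : MvPolynomial (Fin 3) ℂ)^4) * hcd
      - (d * X 1 * (X 2)^4) * hsC - (d * (X 2)^8) * hpC
  · -- J ≤ radical
    rw [Ideal.span_le]
    have hu : (X 0 : MvPolynomial (Fin 3) ℂ) + (X 2)^3 ∈
        (Ideal.span
          {(X 0 : MvPolynomial (Fin 3) ℂ) * X 1 + X 1 * (X 2) ^ 3 + X 0 * (X 2) ^ 4 + (X 2) ^ 7,
            (X 0) ^ 2 * (X 2) ^ 2 + X 0 * (X 2) ^ 5,
            (X 0) ^ 2 + 2 * X 0 * (X 2) ^ 3 + (X 2) ^ 6,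
            X 0 * X 1 + (X 0) ^ 2 * X 2 + X 1 * (X 2) ^ 3 + 2 * X 0 * (X 2) ^ 4 + (X 2) ^ 7,
            -(X 0) ^ 2 - X 0 * (X 2) ^ 3,
            -(X 1) ^ 2 - X 0 * X 1 * X 2 - (X 0) ^ 2 * (X 2) ^ 2 - 2 * X 1 * (X 2) ^ 4
              - X 0 * (X 2) ^ 5 - (X 2) ^ 8}).radical := by
      rw [Ideal.mem_radical_iff]
      refine ⟨2, ?_⟩
      have heq : ((X 0 : MvPolynomial (Fin 3) ℂ) + (X 2)^3)^2
          = (X 0) ^ 2 + 2 * X 0 * (X 2) ^ 3 + (X 2) ^ 6 := by ring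
      rw [heq]
      exact Ideal.subset_span (by
        simp only [Set.mem_insert_iff, Set.mem_singleton_iff]
        exact Or.inr (Or.inr (Or.inl trivial)))
    rintro q (rfl | rfl)
    · exact hu
    · have hg6 : -(X 1 : MvPolynomial (Fin 3) ℂ) ^ 2 - X 0 * X 1 * X 2 - (X 0) ^ 2 * (X 2) ^ 2
          - 2 * X 1 * (X 2) ^ 4 - X 0 * (X 2) ^ 5 - (X 2) ^ 8 ∈
          (Ideal.span
            {(X 0 : MvPolynomial (Fin 3) ℂ) * X 1 + X 1 * (X 2) ^ 3 + X 0 * (X 2) ^ 4 + (X 2) ^ 7,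
              (X 0) ^ 2 * (X 2) ^ 2 + X 0 * (X 2) ^ 5,
              (X 0) ^ 2 + 2 * X 0 * (X 2) ^ 3 + (X 2) ^ 6,
              X 0 * X 1 + (X 0) ^ 2 * X 2 + X 1 * (X 2) ^ 3 + 2 * X 0 * (X 2) ^ 4 + (X 2) ^ 7,
              -(X 0) ^ 2 - X 0 * (X 2) ^ 3,
              -(X 1) ^ 2 - X 0 * X 1 * X 2 - (X 0) ^ 2 * (X 2) ^ 2 - 2 * X 1 * (X 2) ^ 4
                - X 0 * (X 2) ^ 5 - (X 2) ^ 8}).radical :=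
        Ideal.le_radical (Ideal.subset_span (by
          simp only [Set.mem_insert_iff, Set.mem_singleton_iff]
          exact Or.inr (Or.inr (Or.inr (Or.inr (Or.inr trivial))))))
      have heq : (X 1 : MvPolynomial (Fin 3) ℂ) ^ 2 + X 1 * (X 2) ^ 4 + (X 2) ^ 8
          = -(-(X 1 : MvPolynomial (Fin 3) ℂ) ^ 2 - X 0 * X 1 * X 2 - (X 0) ^ 2 * (X 2) ^ 2
              - 2 * X 1 * (X 2) ^ 4 - X 0 * (X 2) ^ 5 - (X 2) ^ 8)
            - (X 1 * X 2 + X 0 * (X 2)^2) * ((X 0) + (X 2)^3) := by ring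
      rw [heq]
      exact sub_mem (neg_mem hg6) (Ideal.mul_mem_left _ _ hu)
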